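/- The Markov transition rates of the allocation algorithm restricted to pairs (ξ, W) with W a complete allocation state satisfy detailed balance with respect to ρ(ξ,W) = [∏_{x: ξ_x=1} ν_x^on · ∏_{x: ξ_x=0} ν_x^off] · (∏_x α_x!)/(∏_{x,y} W_{xy}!) · exp(γΨ(W)): for every pair of states, ρ(ξ,W)·Λ_{(ξ,W),(ξ',W')} = ρ(ξ',W')·Λ_{(ξ',W'),(ξ,W)}. In particular, for a distribution-move transition W' = W − e_{x̄ȳ} + e_{x̄ȳ'} with ξ' = ξ, this reduces to verifying (W'_{x̄ȳ'}/W_{x̄ȳ}) · exp(γ(Ψ(W) − Ψ(W'))) = (W'_{x̄ȳ'}/W_{x̄ȳ}) · exp(γ(f_{x̄ȳ}(W) − f_{x̄ȳ'}(W'))), which holds by the potential identity Ψ(W') − Ψ(W) = f_{x̄ȳ'}(W') − f_{x̄ȳ}(W). -/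
import Mathlib


open Finset

variable {X : Type*} [Fintype X] [DecidableEq X]

def col (W : X → X → ℕ) (y : X) : ℕ := ∑ x, W x y

def add1 (W : X → X → ℕ) (x y : X) : X → X → ℕ :=
  fun a b => W a b + (if a = x ∧ b = y then 1 else 0)

def sub1 (W : X → X → ℕ) (x y : X) : X → X → ℕ :=
  fun a b => W a b - (if a = x ∧ b = y then 1 else 0)

def move (W : X → X → ℕ) (x y y' : X) : X → X → ℕ :=
  fun a b => (W a b + (if a = x ∧ b = y' then 1 else 0)) - (if a = x ∧ b = y then 1 else 0)

/-- Utility `f_{xy}(W) = λ_y − k_c W_y/β_y + k_a W_{xy}`. -/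
noncomputable def util (lam : X → ℝ) (β : X → ℕ) (kc ka : ℝ)
    (W : X → X → ℕ) (x y : X) : ℝ :=
  lam y - kc * (col W y : ℝ) / (β y : ℝ) + ka * (W x y : ℝ)

/-- The potential `Ψ`. -/
noncomputable def Psi (lam : X → ℝ) (β : X → ℕ) (kc ka : ℝ) (W : X → X → ℕ) : ℝ :=
  (∑ y, ∑ s ∈ Finset.range (col W y + 1), (lam y - kc * (s : ℝ) / (β y : ℝ)))
    + ka * ∑ x, ∑ y, ∑ s ∈ Finset.range (W x y + 1), (s : ℝ)

/-- Resources available to `x` under functional state `ξ` and allocation state `V`. -/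
def avail (E : X → X → Prop) [DecidableRel E] (β : X → ℕ) (ξ : X → Bool)
    (V : X → X → ℕ) (x : X) : Finset X :=
  Finset.univ.filter (fun y => E x y ∧ col V y < β y ∧ ξ y = true)

/-- Normalizing factor of the Gibbs distribution. -/
noncomputable def Zg (E : X → X → Prop) [DecidableRel E] (lam : X → ℝ) (β : X → ℕ)
    (kc ka γ : ℝ) (ξ : X → Bool) (V : X → X → ℕ) (x : X) : ℝ :=
  ∑ y ∈ avail E β ξ V x, Real.exp (γ * util lam β kc ka (add1 V x y) x y)

/-- Gibbs probability `p^x_y(ξ, V)`. -/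
noncomputable def gibbs (E : X → X → Prop) [DecidableRel E] (lam : X → ℝ) (β : X → ℕ)
    (kc ka γ : ℝ) (ξ : X → Bool) (V : X → X → ℕ) (x y : X) : ℝ :=
  if y ∈ avail E β ξ V x then
    Real.exp (γ * util lam β kc ka (add1 V x y) x y) / Zg E lam β kc ka γ ξ V x
  else 0

/-- Transition rates of the process `(ξ(t), W(t))` restricted to complete allocation states:
functional flips at rates `ν^on, ν^off`, and distribution moves at rate
`ν^act_{x̄} P^dis_{x̄}(W) (W_{x̄ȳ}/α_{x̄}) p^{x̄}_{ȳ'}(ξ, W − e_{x̄ȳ})`. -/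
noncomputable def rate (E : X → X → Prop) [DecidableRel E] (lam : X → ℝ) (α β : X → ℕ)
    (kc ka γ : ℝ) (νon νoff νact : X → ℝ) (Pdis : X → (X → X → ℕ) → ℝ)
    (s s' : (X → Bool) × (X → X → ℕ)) : ℝ :=
  if s'.2 = s.2 then
    ∑ x, ((if s.1 x = false ∧ s'.1 = Function.update s.1 x true then νon x else 0)
      + (if s.1 x = true ∧ s'.1 = Function.update s.1 x false then νoff x else 0))
  else if s'.1 = s.1 then
    ∑ x, ∑ y, ∑ y',
      (if s.1 x = true ∧ s.1 y = true ∧ y ≠ y' ∧ 0 < s.2 x y ∧ s'.2 = move s.2 x y y' then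
        νact x * Pdis x s.2 * ((s.2 x y : ℝ) / (α x : ℝ))
          * gibbs E lam β kc ka γ s.1 (sub1 s.2 x y) x y'
      else 0)
  else 0

/-- The reversible measure `ρ(ξ,W)`. -/
noncomputable def rho (lam : X → ℝ) (α β : X → ℕ) (kc ka γ : ℝ) (νon νoff : X → ℝ)
    (s : (X → Bool) × (X → X → ℕ)) : ℝ :=
  (∏ x ∈ Finset.univ.filter (fun x => s.1 x = true), νon x) *
    (∏ x ∈ Finset.univ.filter (fun x => s.1 x = false), νoff x) *
    ((∏ x, (α x).factorial : ℕ) : ℝ) / ((∏ x, ∏ y, (s.2 x y).factorial : ℕ) : ℝ) *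
    Real.exp (γ * Psi lam β kc ka s.2)


set_option linter.unusedSectionVars false

lemma col_add1 (V : X → X → ℕ) (x y z : X) :
    col (add1 V x y) z = col V z + if z = y then 1 else 0 := by
  simp only [col, add1]
  rw [Finset.sum_add_distrib]
  congr 1
  by_cases h : z = y
  · subst h; simp
  · simp [h]

lemma sub1_add1 (V : X → X → ℕ) (x y : X) : sub1 (add1 V x y) x y = V := by
  funext a b
  simp [sub1, add1]

lemma add1_sub1 (W : X → X → ℕ) (x y : X) (h : 0 < W x y) :
    add1 (sub1 W x y) x y = W := by
  funext a b
  by_cases h1 : a = x ∧ b = y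
  · obtain ⟨rfl, rfl⟩ := h1
    simp [add1, sub1]
    omega
  · simp [add1, sub1, h1]

lemma add1_entry (V : X → X → ℕ) (x y : X) : add1 V x y x y = V x y + 1 := by
  simp [add1]

lemma move_eq (W : X → X → ℕ) (x y y' : X) (h : 0 < W x y) :
    move W x y y' = add1 (sub1 W x y) x y' := by
  funext a b
  by_cases h1 : a = x ∧ b = y
  · obtain ⟨rfl, rfl⟩ := h1
    by_cases h2 : b = y'
    · subst h2; simp [move, add1, sub1]; omega
    · simp [move, add1, sub1, h2]
  · by_cases h2 : a = x ∧ b = y'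
    · obtain ⟨rfl, rfl⟩ := h2
      have hb : b ≠ y := fun hb => h1 ⟨rfl, hb⟩
      simp [move, add1, sub1, hb]
    · simp [move, add1, sub1, h1, h2]

lemma move_symm (W W' : X → X → ℕ) (x y y' : X) (h : 0 < W x y) (hW' : W' = move W x y y') :
    0 < W' x y' ∧ W = move W' x y' y ∧ sub1 W' x y' = sub1 W x y := by
  have hV : add1 (sub1 W x y) x y = W := add1_sub1 W x y h
  have h2 : W' = add1 (sub1 W x y) x y' := by rw [hW', move_eq W x y y' h]
  have h3 : sub1 W' x y' = sub1 W x y := by rw [h2, sub1_add1]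
  have h4 : 0 < W' x y' := by rw [h2, add1_entry]; omega
  exact ⟨h4, by rw [move_eq W' x y' y h4, h3, hV], h3⟩

lemma sum_update_point (f g : X → ℝ) (y : X) (h : ∀ z, z ≠ y → f z = g z) :
    ∑ z, f z = (∑ z, g z) + (f y - g y) := by
  rw [← Finset.sum_erase_add _ f (Finset.mem_univ y),
    ← Finset.sum_erase_add _ g (Finset.mem_univ y),
    Finset.sum_congr rfl (fun z hz => h z (Finset.ne_of_mem_erase hz))]
  ring

lemma Psi_add1 (lam : X → ℝ) (β : X → ℕ) (kc ka : ℝ) (V : X → X → ℕ) (x y : X) :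
    Psi lam β kc ka (add1 V x y)
      = Psi lam β kc ka V + util lam β kc ka (add1 V x y) x y := by
  have hA : (∑ z, ∑ s ∈ Finset.range (col (add1 V x y) z + 1), (lam z - kc * (s : ℝ) / (β z : ℝ)))
      = (∑ z, ∑ s ∈ Finset.range (col V z + 1), (lam z - kc * (s : ℝ) / (β z : ℝ)))
        + (lam y - kc * ((col V y + 1 : ℕ) : ℝ) / (β y : ℝ)) := by
    rw [sum_update_point _ (fun z => ∑ s ∈ Finset.range (col V z + 1), (lam z - kc * (s : ℝ) / (β z : ℝ)))
      y (fun z hz => by rw [col_add1, if_neg hz, add_zero])]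
    congr 1
    rw [col_add1, if_pos rfl, Finset.sum_range_succ]
    ring
  have hBx : ∀ a, a ≠ x → (∑ b, ∑ s ∈ Finset.range (add1 V x y a b + 1), (s : ℝ))
      = ∑ b, ∑ s ∈ Finset.range (V a b + 1), (s : ℝ) := by
    intro a ha
    refine Finset.sum_congr rfl fun b _ => by simp [add1, ha]
  have hB : (∑ a, ∑ b, ∑ s ∈ Finset.range (add1 V x y a b + 1), (s : ℝ))
      = (∑ a, ∑ b, ∑ s ∈ Finset.range (V a b + 1), (s : ℝ)) + ((V x y + 1 : ℕ) : ℝ) := by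
    rw [sum_update_point _ (fun a => ∑ b, ∑ s ∈ Finset.range (V a b + 1), (s : ℝ)) x hBx]
    congr 1
    rw [sum_update_point (fun b => ∑ s ∈ Finset.range (add1 V x y x b + 1), (s : ℝ))
      (fun b => ∑ s ∈ Finset.range (V x b + 1), (s : ℝ)) y
      (fun b hb => by simp [add1, hb])]
    rw [add1_entry, Finset.sum_range_succ]
    push_cast
    ring
  simp only [Psi, util, add1_entry]
  rw [hA, hB, col_add1, if_pos rfl]
  push_cast
  ring

lemma prodfac_add1 (V : X → X → ℕ) (x y : X) :
    (∏ a, ∏ b, (add1 V x y a b).factorial)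
      = (∏ a, ∏ b, (V a b).factorial) * (V x y + 1) := by
  have e1 : ∏ a ∈ Finset.univ.erase x, ∏ b, (add1 V x y a b).factorial
      = ∏ a ∈ Finset.univ.erase x, ∏ b, (V a b).factorial :=
    Finset.prod_congr rfl fun a ha => Finset.prod_congr rfl
      fun b _ => by simp [add1, Finset.ne_of_mem_erase ha]
  have e2 : ∏ b ∈ Finset.univ.erase y, (add1 V x y x b).factorial
      = ∏ b ∈ Finset.univ.erase y, (V x b).factorial :=
    Finset.prod_congr rfl fun b hb => by simp [add1, Finset.ne_of_mem_erase hb]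
  rw [← Finset.prod_erase_mul _ (fun a => ∏ b, (add1 V x y a b).factorial) (Finset.mem_univ x),
    ← Finset.prod_erase_mul _ (fun a => ∏ b, (V a b).factorial) (Finset.mem_univ x), e1,
    ← Finset.prod_erase_mul _ (fun b => (add1 V x y x b).factorial) (Finset.mem_univ y),
    ← Finset.prod_erase_mul _ (fun b => (V x b).factorial) (Finset.mem_univ y), e2,
    add1_entry, Nat.factorial_succ]
  ring

lemma flip_iff (ξ ξ' : X → Bool) (x : X) :
    (ξ x = false ∧ ξ' = Function.update ξ x true)
      ↔ (ξ' x = true ∧ ξ = Function.update ξ' x false) := by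
  constructor
  · rintro ⟨h1, rfl⟩
    refine ⟨by simp, ?_⟩
    funext z
    rcases eq_or_ne z x with rfl | hz
    · simp [h1]
    · simp [Function.update_of_ne hz]
  · rintro ⟨h1, rfl⟩
    refine ⟨by simp, ?_⟩
    funext z
    rcases eq_or_ne z x with rfl | hz
    · simp [h1]
    · simp [Function.update_of_ne hz]

lemma rho_flip (lam : X → ℝ) (α β : X → ℕ) (kc ka γ : ℝ) (νon νoff : X → ℝ)
    (ξ : X → Bool) (x : X) (hx : ξ x = false) (W : X → X → ℕ) :
    rho lam α β kc ka γ νon νoff (ξ, W) * νon x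
      = rho lam α β kc ka γ νon νoff (Function.update ξ x true, W) * νoff x := by
  have h1 : Finset.univ.filter (fun z => Function.update ξ x true z = true)
      = insert x (Finset.univ.filter (fun z => ξ z = true)) := by
    ext z
    rcases eq_or_ne z x with rfl | hz
    · simp
    · simp [Function.update_of_ne hz, hz]
  have h2 : Finset.univ.filter (fun z => ξ z = false)
      = insert x (Finset.univ.filter (fun z => Function.update ξ x true z = false)) := by
    ext z
    rcases eq_or_ne z x with rfl | hz
    · simp [hx]
    · simp [Function.update_of_ne hz, hz]
  have hm1 : x ∉ Finset.univ.filter (fun z => ξ z = true) := by simp [hx]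
  have hm2 : x ∉ Finset.univ.filter (fun z => Function.update ξ x true z = false) := by simp
  simp only [rho, h1, h2, Finset.prod_insert hm1, Finset.prod_insert hm2]
  ring

lemma rho_key (lam : X → ℝ) (α β : X → ℕ) (kc ka γ : ℝ) (νon νoff : X → ℝ)
    (ξ : X → Bool) (W W' : X → X → ℕ) (x y y' : X)
    (hD : (∏ a, ∏ b, (W' a b).factorial) * W x y = (∏ a, ∏ b, (W a b).factorial) * W' x y')
    (hPsi : Psi lam β kc ka W + util lam β kc ka W' x y'
      = Psi lam β kc ka W' + util lam β kc ka W x y) :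
    rho lam α β kc ka γ νon νoff (ξ, W) * (W x y : ℝ)
        * Real.exp (γ * util lam β kc ka W' x y')
      = rho lam α β kc ka γ νon νoff (ξ, W') * (W' x y' : ℝ)
        * Real.exp (γ * util lam β kc ka W x y) := by
  have hDW : ((∏ a, ∏ b, (W a b).factorial : ℕ) : ℝ) ≠ 0 :=
    Nat.cast_ne_zero.mpr (Finset.prod_pos fun a _ => Finset.prod_pos fun b _ =>
      Nat.factorial_pos _).ne'
  have hDW' : ((∏ a, ∏ b, (W' a b).factorial : ℕ) : ℝ) ≠ 0 :=
    Nat.cast_ne_zero.mpr (Finset.prod_pos fun a _ => Finset.prod_pos fun b _ =>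
      Nat.factorial_pos _).ne'
  have e1 : Real.exp (γ * Psi lam β kc ka W) * Real.exp (γ * util lam β kc ka W' x y')
      = Real.exp (γ * Psi lam β kc ka W') * Real.exp (γ * util lam β kc ka W x y) := by
    rw [← Real.exp_add, ← Real.exp_add]
    congr 1
    linear_combination γ * hPsi
  have e2 : (W x y : ℝ) / ((∏ a, ∏ b, (W a b).factorial : ℕ) : ℝ)
      = (W' x y' : ℝ) / ((∏ a, ∏ b, (W' a b).factorial : ℕ) : ℝ) := by
    rw [div_eq_div_iff hDW hDW']
    have h : W x y * (∏ a, ∏ b, (W' a b).factorial)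
        = W' x y' * (∏ a, ∏ b, (W a b).factorial) := by
      rw [mul_comm, hD, mul_comm]
    exact_mod_cast h
  simp only [rho]
  linear_combination
    ((∏ z ∈ Finset.univ.filter (fun z => ξ z = true), νon z) *
      (∏ z ∈ Finset.univ.filter (fun z => ξ z = false), νoff z) *
      ((∏ z, (α z).factorial : ℕ) : ℝ)) *
      ((Real.exp (γ * Psi lam β kc ka W') * Real.exp (γ * util lam β kc ka W x y)) * e2
        + ((W x y : ℝ) / ((∏ a, ∏ b, (W a b).factorial : ℕ) : ℝ)) * e1)

/-- Detailed balance (Proposition 1 of the paper): restricted to complete allocation states,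
`ρ(ξ,W)·Λ_{(ξ,W),(ξ',W')} = ρ(ξ',W')·Λ_{(ξ',W'),(ξ,W)}` for every pair of states. -/
theorem detailed_balance (E : X → X → Prop) [DecidableRel E] (lam : X → ℝ) (α β : X → ℕ)
    (kc ka γ : ℝ) (hkc : 0 ≤ kc) (hka : 0 ≤ ka) (hβ : ∀ y, 0 < β y)
    (νon νoff νact : X → ℝ) (hon : ∀ x, 0 < νon x) (hoff : ∀ x, 0 < νoff x)
    (hact : ∀ x, 0 < νact x)
    (Pdis : X → (X → X → ℕ) → ℝ)
    (hPdis : ∀ x W, (∀ z, ∑ y, W z y = α z) → Pdis x W = 1)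
    (ξ ξ' : X → Bool) (W W' : X → X → ℕ)
    (hWsupp : ∀ x y, ¬ E x y → W x y = 0)
    (hWrow : ∀ x, ∑ y, W x y = α x)
    (hWcol : ∀ y, col W y ≤ β y)
    (hW'supp : ∀ x y, ¬ E x y → W' x y = 0)
    (hW'row : ∀ x, ∑ y, W' x y = α x)
    (hW'col : ∀ y, col W' y ≤ β y) :
    rho lam α β kc ka γ νon νoff (ξ, W) * rate E lam α β kc ka γ νon νoff νact Pdis (ξ, W) (ξ', W')
      = rho lam α β kc ka γ νon νoff (ξ', W')
        * rate E lam α β kc ka γ νon νoff νact Pdis (ξ', W') (ξ, W) := by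
  by_cases hWW : W' = W
  · by_cases hξξ : ξ' = ξ
    · obtain rfl := hWW; obtain rfl := hξξ; rfl
    · have hWe := hWW.symm; subst hWe
      have hr : ∀ (η η' : X → Bool),
          rate E lam α β kc ka γ νon νoff νact Pdis (η, W) (η', W)
            = ∑ x, ((if η x = false ∧ η' = Function.update η x true then νon x else 0)
              + (if η x = true ∧ η' = Function.update η x false then νoff x else 0)) := by
        intro η η'; simp [rate]
      rw [hr, hr, Finset.mul_sum, Finset.mul_sum]
      refine Finset.sum_congr rfl fun x _ => ?_
      by_cases hA : ξ x = false ∧ ξ' = Function.update ξ x true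
      · have hA' := (flip_iff ξ ξ' x).mp hA
        have hnB : ¬(ξ x = true ∧ ξ' = Function.update ξ x false) := by
          rw [hA.1]; rintro ⟨h, -⟩; exact absurd h (by simp)
        have hnB' : ¬(ξ' x = false ∧ ξ = Function.update ξ' x true) := by
          rw [hA'.1]; rintro ⟨h, -⟩; exact absurd h (by simp)
        rw [if_pos hA, if_neg hnB, if_neg hnB', if_pos hA', add_zero, zero_add]
        obtain ⟨h1, rfl⟩ := hA
        exact rho_flip lam α β kc ka γ νon νoff ξ x h1 W
      · by_cases hB : ξ x = true ∧ ξ' = Function.update ξ x false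
        · have hB' := (flip_iff ξ' ξ x).mpr hB
          have hnA' : ¬(ξ' x = true ∧ ξ = Function.update ξ' x false) :=
            fun h => hA ((flip_iff ξ ξ' x).mpr h)
          rw [if_neg hA, if_pos hB, if_pos hB', if_neg hnA', zero_add, add_zero]
          obtain ⟨h1, h2⟩ := hB'
          rw [h2]
          exact (rho_flip lam α β kc ka γ νon νoff ξ' x h1 W).symm
        · have hnA' : ¬(ξ' x = true ∧ ξ = Function.update ξ' x false) :=
            fun h => hA ((flip_iff ξ ξ' x).mpr h)
          have hnB' : ¬(ξ' x = false ∧ ξ = Function.update ξ' x true) :=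
            fun h => hB ((flip_iff ξ' ξ x).mp h)
          rw [if_neg hA, if_neg hB, if_neg hnA', if_neg hnB']
          simp
  · by_cases hξξ : ξ' = ξ
    · have hξe := hξξ.symm; subst hξe
      have hWW2 : ¬(W = W') := fun h => hWW h.symm
      have hr1 : rate E lam α β kc ka γ νon νoff νact Pdis (ξ, W) (ξ, W')
          = ∑ x, ∑ y, ∑ y',
            (if ξ x = true ∧ ξ y = true ∧ y ≠ y' ∧ 0 < W x y ∧ W' = move W x y y' then
              νact x * Pdis x W * ((W x y : ℝ) / (α x : ℝ))
                * gibbs E lam β kc ka γ ξ (sub1 W x y) x y'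
            else 0) := by
        simp [rate, hWW]
      have hr2 : rate E lam α β kc ka γ νon νoff νact Pdis (ξ, W') (ξ, W)
          = ∑ x, ∑ y, ∑ y',
            (if ξ x = true ∧ ξ y = true ∧ y ≠ y' ∧ 0 < W' x y ∧ W = move W' x y y' then
              νact x * Pdis x W' * ((W' x y : ℝ) / (α x : ℝ))
                * gibbs E lam β kc ka γ ξ (sub1 W' x y) x y'
            else 0) := by
        simp [rate, hWW2]
      rw [hr1, hr2]
      simp only [Finset.mul_sum]
      refine Finset.sum_congr rfl fun x _ => ?_
      conv_rhs => rw [Finset.sum_comm]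
      refine Finset.sum_congr rfl fun y _ => ?_
      refine Finset.sum_congr rfl fun y' _ => ?_
      by_cases hC : ξ x = true ∧ ξ y = true ∧ ξ y' = true ∧ y ≠ y' ∧ 0 < W x y
          ∧ W' = move W x y y'
      · obtain ⟨hx1, hy1, hy'1, hyy', hw, hW'⟩ := hC
        obtain ⟨hw', hback, hsub⟩ := move_symm W W' x y y' hw hW'
        set V := sub1 W x y with hV
        have hWV : add1 V x y = W := add1_sub1 W x y hw
        have hW'V : W' = add1 V x y' := by rw [hW', move_eq W x y y' hw]
        have hEy : E x y := by
          by_contra hE; rw [hWsupp x y hE] at hw; exact absurd hw (lt_irrefl 0)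
        have hEy' : E x y' := by
          by_contra hE; rw [hW'supp x y' hE] at hw'; exact absurd hw' (lt_irrefl 0)
        have hcolVy : col W y = col V y + 1 := by
          conv_lhs => rw [← hWV]
          rw [col_add1, if_pos rfl]
        have hcolVy' : col W' y' = col V y' + 1 := by
          conv_lhs => rw [hW'V]
          rw [col_add1, if_pos rfl]
        have hymem : y ∈ avail E β ξ V x := by
          simp only [avail, Finset.mem_filter]
          refine ⟨Finset.mem_univ y, hEy, ?_, hy1⟩
          have := hWcol y; omega
        have hy'mem : y' ∈ avail E β ξ V x := by
          simp only [avail, Finset.mem_filter]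
          refine ⟨Finset.mem_univ y', hEy', ?_, hy'1⟩
          have := hW'col y'; omega
        rw [if_pos ⟨hx1, hy1, hyy', hw, hW'⟩,
          if_pos (⟨hx1, hy'1, hyy'.symm, hw', hback⟩ :
            ξ x = true ∧ ξ y' = true ∧ y' ≠ y ∧ 0 < W' x y' ∧ W = move W' x y' y)]
        rw [hsub]
        simp only [gibbs]
        rw [if_pos hymem, if_pos hy'mem, ← hW'V]
        conv_rhs => rw [hWV]
        rw [hPdis x W hWrow, hPdis x W' hW'row]
        have hfac : (∏ a, ∏ b, (W' a b).factorial) * (W x y)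
            = (∏ a, ∏ b, (W a b).factorial) * (W' x y') := by
          have f1 : (∏ a, ∏ b, (W a b).factorial)
              = (∏ a, ∏ b, (V a b).factorial) * (V x y + 1) := by
            conv_lhs => rw [← hWV]
            exact prodfac_add1 V x y
          have f2 : (∏ a, ∏ b, (W' a b).factorial)
              = (∏ a, ∏ b, (V a b).factorial) * (V x y' + 1) := by
            conv_lhs => rw [hW'V]
            exact prodfac_add1 V x y'
          have g1 : W x y = V x y + 1 := by conv_lhs => rw [← hWV, add1_entry]
          have g2 : W' x y' = V x y' + 1 := by conv_lhs => rw [hW'V, add1_entry]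
          rw [f1, f2, g1, g2]; ring
        have hPsieq : Psi lam β kc ka W + util lam β kc ka W' x y'
            = Psi lam β kc ka W' + util lam β kc ka W x y := by
          have p1 : Psi lam β kc ka W = Psi lam β kc ka V + util lam β kc ka W x y := by
            conv_lhs => rw [← hWV]
            rw [Psi_add1, hWV]
          have p2 : Psi lam β kc ka W' = Psi lam β kc ka V + util lam β kc ka W' x y' := by
            conv_lhs => rw [hW'V]
            rw [Psi_add1, ← hW'V]
          rw [p1, p2]; ring
        have key := rho_key lam α β kc ka γ νon νoff ξ W W' x y y' hfac hPsieq
        linear_combination (νact x * ((α x : ℝ))⁻¹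
          * (Zg E lam β kc ka γ ξ V x)⁻¹) * key
      · have hL : (if ξ x = true ∧ ξ y = true ∧ y ≠ y' ∧ 0 < W x y ∧ W' = move W x y y' then
              νact x * Pdis x W * ((W x y : ℝ) / (α x : ℝ))
                * gibbs E lam β kc ka γ ξ (sub1 W x y) x y'
            else 0) = 0 := by
          by_cases hcf : ξ x = true ∧ ξ y = true ∧ y ≠ y' ∧ 0 < W x y ∧ W' = move W x y y'
          · have hy' : ¬ ξ y' = true := fun h =>
              hC ⟨hcf.1, hcf.2.1, h, hcf.2.2⟩
            rw [if_pos hcf]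
            have hg : gibbs E lam β kc ka γ ξ (sub1 W x y) x y' = 0 := by
              rw [gibbs, if_neg (by simp [avail, hy'])]
            rw [hg, mul_zero]
          · rw [if_neg hcf]
        have hR : (if ξ x = true ∧ ξ y' = true ∧ y' ≠ y ∧ 0 < W' x y' ∧ W = move W' x y' y then
              νact x * Pdis x W' * ((W' x y' : ℝ) / (α x : ℝ))
                * gibbs E lam β kc ka γ ξ (sub1 W' x y') x y
            else 0) = 0 := by
          by_cases hcr : ξ x = true ∧ ξ y' = true ∧ y' ≠ y ∧ 0 < W' x y' ∧ W = move W' x y' y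
          · obtain ⟨hx1, hy'1, hy'y, hw', hback⟩ := hcr
            obtain ⟨hw, hfwd, -⟩ := move_symm W' W x y' y hw' hback
            have hy : ¬ ξ y = true := fun h =>
              hC ⟨hx1, h, hy'1, hy'y.symm, hw, hfwd⟩
            rw [if_pos ⟨hx1, hy'1, hy'y, hw', hback⟩]
            have hg : gibbs E lam β kc ka γ ξ (sub1 W' x y') x y = 0 := by
              rw [gibbs, if_neg (by simp [avail, hy])]
            rw [hg, mul_zero]
          · rw [if_neg hcr]
        rw [hL, hR, mul_zero, mul_zero]
    · have hWW2 : ¬(W = W') := fun h => hWW h.symm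
      have hξξ2 : ¬(ξ = ξ') := fun h => hξξ h.symm
      simp [rate, hWW, hξξ, hWW2, hξξ2]
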